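/- arXiv:1308.1722 — 5 statements merged into one kernel-verified Lean document; each statement's English description precedes it below -/
import Mathlib

section
/- Let f : [0, a) → ℝ be differentiable with f(0) = θ₀ < 0 and f'(t) < -(1/3) f(t)² for all t ∈ [0,a). Then for all T ∈ (0,a), f(T) < 3θ₀/(Tθ₀ + 3). -/
/-!
Since `f' < -f²/3 ≤ 0`, `f` decreases from `f 0 = θ₀ < 0`, so it stays negative and `1/f` is
defined. The Riccati inequality then says exactly that `(1/f)' = -f'/f² > 1/3`, i.e.
`t ↦ 1/f t - t/3` is strictly increasing, so `1/f T > 1/θ₀ + T/3`. As `1/f T < 0`, the right-hand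
side `(Tθ₀ + 3)/(3θ₀)` is negative too, and inverting gives `f T < 3θ₀/(Tθ₀ + 3)`.
-/

open Set

section Monotonicity

variable {D : Set ℝ} {f f' : ℝ → ℝ}

lemma Convex.antitoneOn_of_forall_hasDerivWithinAt_nonpos (hD : Convex ℝ D)
    (hf : ∀ x ∈ D, HasDerivWithinAt f (f' x) D x) (hf' : ∀ x ∈ D, f' x ≤ 0) :
    AntitoneOn f D :=
  antitoneOn_of_hasDerivWithinAt_nonpos hD (fun x hx ↦ (hf x hx).continuousWithinAt)
    (fun x hx ↦ (hf x (interior_subset hx)).mono interior_subset)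
    (fun x hx ↦ hf' x (interior_subset hx))

lemma Convex.strictMonoOn_of_forall_hasDerivWithinAt_pos (hD : Convex ℝ D)
    (hf : ∀ x ∈ D, HasDerivWithinAt f (f' x) D x) (hf' : ∀ x ∈ D, 0 < f' x) :
    StrictMonoOn f D :=
  strictMonoOn_of_hasDerivWithinAt_pos hD (fun x hx ↦ (hf x hx).continuousWithinAt)
    (fun x hx ↦ (hf x (interior_subset hx)).mono interior_subset)
    (fun x hx ↦ hf' x (interior_subset hx))

lemma Convex.strictMonoOn_inv_sub_mul_of_hasDerivWithinAt (hD : Convex ℝ D)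
    (hf : ∀ x ∈ D, HasDerivWithinAt f (f' x) D x) (hf₀ : ∀ x ∈ D, f x ≠ 0) (c : ℝ)
    (hf' : ∀ x ∈ D, f' x < -c * f x ^ 2) :
    StrictMonoOn (fun t ↦ (f t)⁻¹ - c * t) D := by
  refine hD.strictMonoOn_of_forall_hasDerivWithinAt_pos
    (fun x hx ↦ ((hf x hx).inv (hf₀ x hx)).sub ((hasDerivWithinAt_id x D).const_mul c))
    fun x hx ↦ ?_
  have hsq : 0 < f x ^ 2 := by positivity [hf₀ x hx]
  rw [mul_one, sub_pos, lt_div_iff₀ hsq]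
  linarith [hf' x hx]

end Monotonicity

lemma lt_div_of_inv_add_div_lt_inv {x y T : ℝ} (hx : x ≠ 0) (hy : y < 0)
    (h : x⁻¹ + T / 3 < y⁻¹) : y < 3 * x / (T * x + 3) := by
  have hs : x⁻¹ + T / 3 < 0 := h.trans (inv_lt_zero.mpr hy)
  have hs' : x⁻¹ + T / 3 = (T * x + 3) / (3 * x) := by
    field_simp
    ring
  rwa [← inv_div, ← hs', ← inv_lt_inv_of_neg (inv_lt_zero.mpr hs) hy, inv_inv]

/-- If `f : [0,a) → ℝ` is differentiable with `f 0 = θ₀ < 0` and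
`f' t < -(1/3) f t ^ 2` on `[0,a)`, then `f T < 3θ₀/(Tθ₀+3)` for all `T ∈ (0,a)`. -/
theorem stmt2 (a θ₀ : ℝ) (f f' : ℝ → ℝ)
    (hderiv : ∀ t ∈ Set.Ico (0 : ℝ) a, HasDerivWithinAt f (f' t) (Set.Ico 0 a) t)
    (h0 : f 0 = θ₀) (hθ₀ : θ₀ < 0)
    (hineq : ∀ t ∈ Set.Ico (0 : ℝ) a, f' t < -(1/3) * (f t)^2) :
    ∀ T, 0 < T → T < a → f T < 3 * θ₀ / (T * θ₀ + 3) := by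
  intro T hT0 hTa
  have hD : Convex ℝ (Ico (0 : ℝ) a) := convex_Ico 0 a
  have h0mem : (0 : ℝ) ∈ Ico 0 a := ⟨le_rfl, hT0.trans hTa⟩
  have hTmem : T ∈ Ico 0 a := ⟨hT0.le, hTa⟩
  have hanti : AntitoneOn f (Ico 0 a) :=
    hD.antitoneOn_of_forall_hasDerivWithinAt_nonpos hderiv fun t ht ↦
      (hineq t ht).le.trans (by nlinarith [sq_nonneg (f t)])
  have hneg : ∀ t ∈ Ico (0 : ℝ) a, f t < 0 := fun t ht ↦
    (hanti h0mem ht ht.1).trans_lt (h0 ▸ hθ₀)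
  have hmono := hD.strictMonoOn_inv_sub_mul_of_hasDerivWithinAt hderiv
    (fun t ht ↦ (hneg t ht).ne) (1 / 3) hineq
  have hkey := hmono h0mem hTmem hT0
  simp only [h0, mul_zero, sub_zero] at hkey
  exact lt_div_of_inv_add_div_lt_inv hθ₀.ne (hneg T hTmem) (by linarith)
end

section
/- Let f : [0, a) → ℝ be differentiable satisfying f'(t) < -c·f(t)² - k for all t, where c > 0 and k > 0 are constants. Then a is finite; in fact a ≤ f(0)-independent bound plus the blow-up time: a < π/(2√(ck)) + (if f(0) < 0 then 1/(c|f(0)|) else 0). More simply: no such f exists on [0,∞). -/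
/-!
With `a = √(c/k)`, the function `g t = arctan (a f t) + √(ck) t` is nonincreasing, since
`g' = a (f' + c f² + k) / (1 + a² f²) ≤ 0`. As `arctan` takes values in `(-π/2, π/2)`, this gives
`√(ck) T < arctan (a f 0) + π/2 < π` on any interval `[0, T]` where `f` exists, so `T < π/√(ck)`.
-/

open Real Set

theorem antitoneOn_arctan_mul_add_mul {a k : ℝ} {D : Set ℝ} {f f' : ℝ → ℝ} (hD : Convex ℝ D)
    (ha : 0 ≤ a) (hderiv : ∀ t ∈ D, HasDerivWithinAt f (f' t) D t)
    (hineq : ∀ t ∈ D, f' t ≤ -(a ^ 2 * k) * f t ^ 2 - k) :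
    AntitoneOn (fun t => arctan (a * f t) + a * k * t) D := by
  have hg : ∀ t ∈ D, HasDerivWithinAt (fun t => arctan (a * f t) + a * k * t)
      (1 / (1 + (a * f t) ^ 2) * (a * f' t) + a * k * 1) D t := fun t ht =>
    ((hasDerivAt_arctan _).comp_hasDerivWithinAt t ((hderiv t ht).const_mul a)).add
      ((hasDerivWithinAt_id t D).const_mul (a * k))
  refine antitoneOn_of_hasDerivWithinAt_nonpos hD
    (fun t ht => (hg t ht).continuousWithinAt)
    (fun t ht => (hg t (interior_subset ht)).mono interior_subset) fun t ht => ?_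
  have hpos : 0 < 1 + (a * f t) ^ 2 := by positivity
  have hnum : a * f' t + a * k * (1 + (a * f t) ^ 2) ≤ 0 := by
    have := mul_le_mul_of_nonneg_left (hineq t (interior_subset ht)) ha
    linear_combination this
  calc 1 / (1 + (a * f t) ^ 2) * (a * f' t) + a * k * 1
      = (a * f' t + a * k * (1 + (a * f t) ^ 2)) / (1 + (a * f t) ^ 2) := by
        field_simp
    _ ≤ 0 := div_nonpos_of_nonpos_of_nonneg hnum hpos.le

theorem riccati_lifetime_bound {c k T : ℝ} {f f' : ℝ → ℝ} (hc : 0 ≤ c) (hk : 0 < k) (hT : 0 ≤ T)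
    (hderiv : ∀ t ∈ Icc 0 T, HasDerivWithinAt f (f' t) (Icc 0 T) t)
    (hineq : ∀ t ∈ Icc 0 T, f' t ≤ -c * f t ^ 2 - k) :
    √(c * k) * T < arctan (√(c / k) * f 0) + π / 2 := by
  have hak : √(c / k) * k = √(c * k) := by
    rw [show c * k = c / k * k ^ 2 by field_simp, sqrt_mul (div_nonneg hc hk.le), sqrt_sq hk.le]
  have hc_eq : √(c / k) ^ 2 * k = c := by
    rw [sq_sqrt (div_nonneg hc hk.le)]
    field_simp
  have hanti := antitoneOn_arctan_mul_add_mul (convex_Icc 0 T) (sqrt_nonneg _) hderiv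
    (by rwa [hc_eq])
  have hdecr := hanti (left_mem_Icc.2 hT) (right_mem_Icc.2 hT) hT
  simp only [hak, mul_zero, add_zero] at hdecr
  linarith [neg_pi_div_two_lt_arctan (√(c / k) * f T)]

/-- Strengthened Riccati inequality: if `c > 0`, `k > 0`, then there is no
differentiable `f : [0,∞) → ℝ` with `f' t < -c * f t ^ 2 - k` everywhere:
finite-time blow-up is forced regardless of initial data. -/
theorem stmt4 (c k : ℝ) (hc : 0 < c) (hk : 0 < k) (f f' : ℝ → ℝ)
    (hderiv : ∀ t ∈ Set.Ici (0 : ℝ), HasDerivWithinAt f (f' t) (Set.Ici 0) t)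
    (hineq : ∀ t ∈ Set.Ici (0 : ℝ), f' t < -c * (f t)^2 - k) :
    False := by
  have hr : 0 < √(c * k) := sqrt_pos.2 (mul_pos hc hk)
  set T := π / √(c * k)
  have hT : √(c * k) * T = π := mul_div_cancel₀ π hr.ne'
  have hbound := riccati_lifetime_bound (T := T) (f' := f') hc.le hk (by positivity)
    (fun t ht => (hderiv t ht.1).mono Icc_subset_Ici_self) fun t ht => (hineq t ht.1).le
  linarith [arctan_lt_pi_div_two (√(c / k) * f 0)]
end

section
/- Suppose θ : ℝ → ℝ is differentiable and satisfies θ'(t) = -4πρ(t) - (1/3)θ(t)² with ρ(t) ≥ ρ₀ > 0 for all t in the domain. Then θ cannot be defined on all of ℝ. -/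
/-!
Since `ρ ≥ ρ₀ > 0`, the equation gives `θ' ≤ -4πρ₀`, so `θ` becomes negative at some time. It also
gives the Riccati inequality `θ' ≤ -θ²/3`; once `θ < 0`, this says `(1/θ)' ≥ 1/3`, so `1/θ`, which
starts out negative, would reach `0` within finite time. Hence a global solution of the Riccati
inequality is nonnegative, which contradicts the first observation.
-/

open Set

lemma exists_neg_of_deriv_le_neg {f : ℝ → ℝ} {c : ℝ} (hc : 0 < c) (hf : Differentiable ℝ f)
    (hf' : ∀ t, deriv f t ≤ -c) : ∃ t, f t < 0 := by
  refine ⟨|f 0| / c + 1, ?_⟩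
  have hdecay := image_sub_le_mul_sub_of_deriv_le hf hf' (by positivity : (0 : ℝ) ≤ |f 0| / c + 1)
  have hc_mul : c * (|f 0| / c) = |f 0| := mul_div_cancel₀ _ hc.ne'
  nlinarith [le_abs_self (f 0)]

lemma nonneg_of_deriv_le_neg_mul_sq {f : ℝ → ℝ} {k : ℝ} (hk : 0 < k) (hf : Differentiable ℝ f)
    (hf' : ∀ t, deriv f t ≤ -k * f t ^ 2) (a : ℝ) : 0 ≤ f a := by
  by_contra! ha
  have hanti : Antitone f :=
    antitone_of_deriv_nonpos hf fun t => (hf' t).trans (by nlinarith [sq_nonneg (f t)])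
  have hneg : ∀ t ∈ Ici a, f t < 0 := fun t ht => (hanti ht).trans_lt ha
  have hinv_growth : ∀ x ∈ Ici a, ∀ y ∈ Ici a, x ≤ y → k * (y - x) ≤ (f y)⁻¹ - (f x)⁻¹ := by
    refine (convex_Ici a).mul_sub_le_image_sub_of_le_deriv
      (hf.continuous.continuousOn.inv₀ fun t ht => (hneg t ht).ne)
      (fun t ht => ((hf t).inv (hneg t (interior_subset ht)).ne).differentiableWithinAt) ?_
    intro t ht
    have hft := hneg t (interior_subset ht)
    rw [((hf t).hasDerivAt.inv hft.ne).deriv, le_div_iff₀ (sq_pos_of_neg hft)]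
    linarith [hf' t]
  set b := a - (f a)⁻¹ / k
  have hab : a ≤ b := by
    have : (f a)⁻¹ / k < 0 := div_neg_of_neg_of_pos (inv_lt_zero.mpr ha) hk
    linarith
  have hreach : k * (b - a) = -(f a)⁻¹ := by
    simp only [b]
    field_simp
    ring
  have hgrowth := hinv_growth a self_mem_Ici b hab hab
  linarith [inv_lt_zero.mpr (hneg b hab)]

/-- Scalar Raychaudhuri–Komar theorem along an integral curve: if `θ : ℝ → ℝ`
is differentiable and satisfies `θ' = -4πρ - θ²/3` with `ρ ≥ ρ₀ > 0`
everywhere, we get a contradiction: `θ` cannot be defined on all of `ℝ`. -/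
theorem stmt8 (θ ρ : ℝ → ℝ) (ρ₀ : ℝ) (hρ₀ : 0 < ρ₀) (hρ : ∀ t, ρ₀ ≤ ρ t)
    (hdiff : Differentiable ℝ θ)
    (hode : ∀ t, deriv θ t = -(4 * Real.pi * ρ t) - (1/3) * (θ t)^2) :
    False := by
  have hsource : ∀ t, 4 * Real.pi * ρ₀ ≤ 4 * Real.pi * ρ t := fun t => by
    gcongr
    exact hρ t
  have hdecay : ∀ t, deriv θ t ≤ -(4 * Real.pi * ρ₀) := fun t => by
    nlinarith [hode t, hsource t, sq_nonneg (θ t)]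
  have hriccati : ∀ t, deriv θ t ≤ -(1/3) * θ t ^ 2 := fun t => by
    nlinarith [hode t, hsource t, Real.pi_pos]
  obtain ⟨t, ht⟩ := exists_neg_of_deriv_le_neg (by positivity) hdiff hdecay
  linarith [nonneg_of_deriv_le_neg_mul_sq (by norm_num) hdiff hriccati t]
end

section
/- Let M be a smooth manifold with a torsion-free affine connection ∇, let ξ be a vector field on M whose integral curves are geodesics (∇_ξ ξ = 0), and let θ = div ξ (the trace of ∇ξ). If along a maximal integral curve γ : I → M of ξ the function θ∘γ has somewhere a negative value θ₀ and satisfies (θ∘γ)' ≤ -(1/3)(θ∘γ)², then sup I - t₀ ≤ 3/|θ₀| where θ(γ(t₀)) = θ₀; in particular γ is future-incomplete. -/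
/-! Along the Riccati inequality `g' ≤ -c g²` the function `g` is nonincreasing, so it stays
below its negative initial value `g a`; there `-1/g` has derivative `g'/g² ≤ -c`, hence
`-1/g(x) + c x` is nonincreasing. Since `-1/g(b) ≥ 0`, this gives `c (b - a) ≤ -1/g(a)`. -/

section Riccati

variable {g g' : ℝ → ℝ} {S : Set ℝ} {c : ℝ}

lemma antitoneOn_of_hasDerivWithinAt_nonpos_of_convex (hS : Convex ℝ S)
    (hderiv : ∀ x ∈ S, HasDerivWithinAt g (g' x) S x) (hnonpos : ∀ x ∈ S, g' x ≤ 0) :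
    AntitoneOn g S :=
  antitoneOn_of_hasDerivWithinAt_nonpos hS
    (fun x hx => (hderiv x hx).continuousWithinAt)
    (fun x hx => (hderiv x (interior_subset hx)).mono interior_subset)
    (fun x hx => hnonpos x (interior_subset hx))

lemma antitoneOn_of_riccati (hS : Convex ℝ S) (hc : 0 ≤ c)
    (hderiv : ∀ x ∈ S, HasDerivWithinAt g (g' x) S x)
    (hineq : ∀ x ∈ S, g' x ≤ -c * g x ^ 2) : AntitoneOn g S :=
  antitoneOn_of_hasDerivWithinAt_nonpos_of_convex hS hderiv fun x hx => by
    nlinarith [hineq x hx, sq_nonneg (g x)]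

lemma antitoneOn_neg_inv_add_mul_of_riccati (hS : Convex ℝ S)
    (hneg : ∀ x ∈ S, g x < 0) (hderiv : ∀ x ∈ S, HasDerivWithinAt g (g' x) S x)
    (hineq : ∀ x ∈ S, g' x ≤ -c * g x ^ 2) :
    AntitoneOn (fun x => -(g x)⁻¹ + c * x) S := by
  refine antitoneOn_of_hasDerivWithinAt_nonpos_of_convex hS
    (g' := fun x => g' x / g x ^ 2 + c) (fun x hx => ?_) (fun x hx => ?_)
  · have hinv := ((hderiv x hx).inv (hneg x hx).ne).neg
    exact (hinv.add ((hasDerivWithinAt_id x S).const_mul c)).congr_deriv (by ring)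
  · have hsq : 0 < g x ^ 2 := by nlinarith [hneg x hx]
    have : g' x / g x ^ 2 ≤ -c := by
      rw [div_le_iff₀ hsq]
      linarith [hineq x hx]
    linarith

theorem mul_sub_le_neg_inv_of_riccati {a b : ℝ} (hab : a ≤ b) (hc : 0 ≤ c)
    (hderiv : ∀ x ∈ Set.Icc a b, HasDerivWithinAt g (g' x) (Set.Icc a b) x)
    (hineq : ∀ x ∈ Set.Icc a b, g' x ≤ -c * g x ^ 2) (ha : g a < 0) :
    c * (b - a) ≤ -(g a)⁻¹ := by
  have ha_mem : a ∈ Set.Icc a b := Set.left_mem_Icc.2 hab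
  have hb_mem : b ∈ Set.Icc a b := Set.right_mem_Icc.2 hab
  have hneg : ∀ x ∈ Set.Icc a b, g x < 0 := fun x hx =>
    (antitoneOn_of_riccati (convex_Icc a b) hc hderiv hineq ha_mem hx hx.1).trans_lt ha
  have hmono := antitoneOn_neg_inv_add_mul_of_riccati (convex_Icc a b) hneg hderiv hineq
    ha_mem hb_mem hab
  have hb_inv : (g b)⁻¹ < 0 := inv_lt_zero.2 (hneg b hb_mem)
  dsimp only at hmono
  linarith

end Riccati

/-- Raychaudhuri incompleteness bound along a maximal integral curve (reduced
scalar form): if on an interval `I` the expansion `g = θ ∘ γ` satisfies the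
Riccati inequality `g' ≤ -(1/3) g²` and takes a negative value `θ₀` at
`t₀ ∈ I`, then every `t ∈ I` satisfies `t - t₀ ≤ 3/|θ₀|`; in particular `I`
has finite supremum, so the curve is future-incomplete. -/
theorem stmt10 (I : Set ℝ) (hI : I.OrdConnected) (g g' : ℝ → ℝ) (t₀ θ₀ : ℝ)
    (ht₀ : t₀ ∈ I) (hg0 : g t₀ = θ₀) (hθ₀ : θ₀ < 0)
    (hderiv : ∀ t ∈ I, HasDerivWithinAt g (g' t) I t)
    (hineq : ∀ t ∈ I, g' t ≤ -(1/3) * (g t)^2) :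
    ∀ t ∈ I, t - t₀ ≤ 3 / |θ₀| := by
  intro t ht
  have hbound : 0 ≤ 3 / |θ₀| := by positivity
  rcases le_or_gt t t₀ with hle | hlt
  · linarith
  have hsub : Set.Icc t₀ t ⊆ I := hI.out ht₀ ht
  have key := mul_sub_le_neg_inv_of_riccati hlt.le (by norm_num)
    (fun x hx => (hderiv x (hsub hx)).mono hsub) (fun x hx => hineq x (hsub hx))
    (hg0.trans_lt hθ₀)
  rw [hg0] at key
  rw [abs_of_neg hθ₀, div_neg, div_eq_mul_inv]
  linarith
end

section
/- With notation as in the Trautman geometrization theorem (flat ∇, Cᵃ_{bc} = -t_b t_c ∇ᵃφ, t closed), the Ricci tensor of ∇ᵍ = (∇, C) is R^g_{bc} = t_b t_c ∇_a∇ᵃφ. In particular, if Poisson's equation ∇_a∇ᵃφ = 4πρ holds, then R^g_{bc} = 4πρ t_b t_c. -/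
open Finset

section GeometrizedCurvature

variable {ι R : Type*} [Fintype ι] [CommRing R]

/-- The two quadratic terms of the Ricci trace agree summand by summand. -/
lemma sum_sum_mul_sub_sum_mul_eq_zero {t v : ι → R} {C : ι → ι → ι → R}
    (hC : ∀ a b c, C a b c = -(t b * t c * v a)) (b c : ι) :
    ∑ a, ((∑ n, C n b c * C a a n) - ∑ n, C n b a * C a c n) = 0 := by
  simp only [hC, ← sum_sub_distrib]
  exact sum_eq_zero fun a _ => sum_eq_zero fun n _ => by ring

lemma sum_sub_eq_mul_trace {t : ι → R} {D : ι → ι → R} {DC : ι → ι → ι → ι → R}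
    (hpar : ∀ b, ∑ a, t a * D b a = 0)
    (hDC : ∀ a b c d, DC a b c d = -(t c * t d * D a b)) (b c : ι) :
    ∑ a, (DC c a a b - DC a a c b) = t b * t c * ∑ a, D a a := by
  have hcross : ∑ a, t a * t b * D c a = 0 := by
    simp_rw [mul_right_comm _ (t b), ← sum_mul, hpar, zero_mul]
  simp only [hDC, sum_sub_distrib, sum_neg_distrib, hcross, mul_sum]
  simp only [neg_zero, zero_sub, neg_neg]
  exact sum_congr rfl fun a _ => by ring

lemma ricci_trace_eq {t v : ι → R} {D : ι → ι → R} {C : ι → ι → ι → R}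
    {DC Riemann : ι → ι → ι → ι → R}
    (hpar : ∀ b, ∑ a, t a * D b a = 0)
    (hC : ∀ a b c, C a b c = -(t b * t c * v a))
    (hDC : ∀ a b c d, DC a b c d = -(t c * t d * D a b))
    (hRiemann : ∀ a b c d, Riemann a b c d =
      DC c a d b - DC d a c b + (∑ n, C n b c * C a d n) - ∑ n, C n b d * C a c n)
    (b c : ι) :
    ∑ a, Riemann a b c a = t b * t c * ∑ a, D a a := by
  have hsplit : ∑ a, Riemann a b c a = ∑ a, (DC c a a b - DC a a c b)
      + ∑ a, ((∑ n, C n b c * C a a n) - ∑ n, C n b a * C a c n) := by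
    rw [← sum_add_distrib]
    exact sum_congr rfl fun a _ => by rw [hRiemann]; ring
  rw [hsplit, sum_sub_eq_mul_trace hpar hDC, sum_sum_mul_sub_sum_mul_eq_zero hC, add_zero]

end GeometrizedCurvature

theorem stmt15_general (M : Type*)
    (t : M → Fin 4 → ℝ)                      -- t_a
    (φvec : M → Fin 4 → ℝ)                   -- φᵃ = h^{ab} ∇_b φ
    (Dφvec : M → Fin 4 → Fin 4 → ℝ)          -- ∇_a φᵇ
    (ρ : M → ℝ)
    (C : M → Fin 4 → Fin 4 → Fin 4 → ℝ)      -- Cᵃ_{bc}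
    (DC : M → Fin 4 → Fin 4 → Fin 4 → Fin 4 → ℝ)  -- ∇_a Cᵇ_{cd}
    (Riemann : M → Fin 4 → Fin 4 → Fin 4 → Fin 4 → ℝ)  -- Rᵃ_{bcd} of ∇ᵍ
    (Ricci : M → Fin 4 → Fin 4 → ℝ)          -- R_{bc} = Rᵃ_{bca}
    (hpar : ∀ p b, ∑ a, t p a * Dφvec p b a = 0)  -- t_a ∇_b φᵃ = 0 (from ∇t = 0)
    (hC : ∀ p a b c, C p a b c = -(t p b * t p c * φvec p a))
    (hDC : ∀ p a b c d, DC p a b c d = -(t p c * t p d * Dφvec p a b))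
    (hRiemann : ∀ p a b c d, Riemann p a b c d =
      DC p c a d b - DC p d a c b
        + (∑ n, C p n b c * C p a d n) - ∑ n, C p n b d * C p a c n)
    (hRicci : ∀ p b c, Ricci p b c = ∑ a, Riemann p a b c a) :
    (∀ p b c, Ricci p b c = t p b * t p c * ∑ a, Dφvec p a a) ∧
      ((∀ p, (∑ a, Dφvec p a a) = 4 * Real.pi * ρ p) →
        ∀ p b c, Ricci p b c = 4 * Real.pi * ρ p * (t p b * t p c)) := by
  have ricci : ∀ p b c, Ricci p b c = t p b * t p c * ∑ a, Dφvec p a a := fun p b c => by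
    rw [hRicci, ricci_trace_eq (hpar p) (hC p) (hDC p) (hRiemann p)]
  refine ⟨ricci, fun hpoisson p b c => ?_⟩
  rw [ricci, hpoisson, mul_comm]

/-- Curvature of the geometrized connection (component form).  With
`Cᵃ_{bc} = -t_b t_c φᵃ` (where `φᵃ = h^{ab}∇_bφ` is the gravitational field,
`h^{ab} t_b = 0`, and `t` is parallel, so `∇_c Cᵃ_{db} = -t_d t_b ∇_c φᵃ` and
`t_a φᵃ = 0`, `t_a ∇_b φᵃ = 0`), the Riemann tensor of `∇ᵍ = (∇, C)` relative
to the flat `∇` is `Rᵃ_{bcd} = 2∇_{[c}Cᵃ_{d]b} + 2Cⁿ_{b[c}Cᵃ_{d]n}`, and its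
Ricci trace `R_{bc} = Rᵃ_{bca}` equals `t_b t_c ∇_a∇ᵃφ`.  In particular, if
Poisson's equation `∇_a∇ᵃφ = 4πρ` holds, then `R_{bc} = 4πρ t_b t_c`. -/
theorem stmt15 (M : Type*)
    (t : M → Fin 4 → ℝ)                      -- t_a
    (h : M → Fin 4 → Fin 4 → ℝ)              -- h^{ab}
    (dφ : M → Fin 4 → ℝ)                     -- ∇_a φ
    (φvec : M → Fin 4 → ℝ)                   -- φᵃ = h^{ab} ∇_b φ
    (Dφvec : M → Fin 4 → Fin 4 → ℝ)          -- ∇_a φᵇ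
    (ρ : M → ℝ)
    (C : M → Fin 4 → Fin 4 → Fin 4 → ℝ)      -- Cᵃ_{bc}
    (DC : M → Fin 4 → Fin 4 → Fin 4 → Fin 4 → ℝ)  -- ∇_a Cᵇ_{cd}
    (Riemann : M → Fin 4 → Fin 4 → Fin 4 → Fin 4 → ℝ)  -- Rᵃ_{bcd} of ∇ᵍ
    (Ricci : M → Fin 4 → Fin 4 → ℝ)          -- R_{bc} = Rᵃ_{bca}
    (hsymm : ∀ p a b, h p a b = h p b a)
    (horth : ∀ p a, ∑ b, h p a b * t p b = 0)
    (hφvec : ∀ p a, φvec p a = ∑ b, h p a b * dφ p b)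
    (hpar : ∀ p b, ∑ a, t p a * Dφvec p b a = 0)  -- t_a ∇_b φᵃ = 0 (from ∇t = 0)
    (hC : ∀ p a b c, C p a b c = -(t p b * t p c * φvec p a))
    (hDC : ∀ p a b c d, DC p a b c d = -(t p c * t p d * Dφvec p a b))
    (hRiemann : ∀ p a b c d, Riemann p a b c d =
      DC p c a d b - DC p d a c b
        + (∑ n, C p n b c * C p a d n) - ∑ n, C p n b d * C p a c n)
    (hRicci : ∀ p b c, Ricci p b c = ∑ a, Riemann p a b c a) :
    (∀ p b c, Ricci p b c = t p b * t p c * ∑ a, Dφvec p a a) ∧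
      ((∀ p, (∑ a, Dφvec p a a) = 4 * Real.pi * ρ p) →
        ∀ p b c, Ricci p b c = 4 * Real.pi * ρ p * (t p b * t p c)) :=
  stmt15_general M t φvec Dφvec ρ C DC Riemann Ricci hpar hC hDC hRiemann hRicci
end
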